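/- Let C be a small category and J a Grothendieck topology on C. Then the following are equivalent: (i) for every object c of C and every sieve R on c, the sieve R ⊔ ¬R is J-covering; (ii) for every presheaf E : Cᵒᵖ ⥤ Type and every subpresheaf A of E, the subpresheaf A ⊔ N(A) is J-dense in E. -/

import Mathlib

/-!
For `e ∈ E(c)` the sieve `S^{A ⊔ N(A)}_(c,e)` is exactly `S ⊔ ¬S` with `S = S^A_(c,e)`, so (i)
gives (ii) directly. Conversely every sieve `R` on `c` is of the form `S^A_(c,e)`: take for `A` the
subpresheaf of `yoneda c` whose sections are the arrows of `R`, and `e = 𝟙 c`.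
-/

open CategoryTheory CategoryTheory.GrothendieckTopology Opposite

universe u

namespace Stmt10

variable {C : Type u} [SmallCategory C]

/-- The pseudocomplement `¬R` of a sieve `R` on `c`: the sieve of morphisms `f` with
codomain `c` whose pullback sieve `f*(R)` is empty. -/
def negSieve {c : C} (R : Sieve c) : Sieve c where
  arrows := fun _ f => R.pullback f = ⊥
  downward_closed := by
    intro d e f hf g
    rw [Sieve.pullback_comp, hf]
    exact le_antisymm (fun Y h hh => hh) bot_le

/-- The subpresheaf `N(A)` of `E`, whose sections at `c` are the sections `e ∈ E(c)` such
that no restriction of `e` along any morphism lies in `A`. -/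
def negSub (E : Cᵒᵖ ⥤ Type u) (A : Subfunctor E) : Subfunctor E where
  obj c := {e | ∀ (d : C) (f : d ⟶ unop c), E.map f.op e ∉ A.obj (op d)}
  map := by
    intro U V i e he d f hf
    apply he d (f ≫ i.unop)
    have : (f ≫ i.unop).op = i ≫ f.op := rfl
    rw [this, FunctorToTypes.map_comp_apply] at *
    exact hf

/-- The union `A ⊔ B` of two subpresheaves of `E`. -/
def unionSub (E : Cᵒᵖ ⥤ Type u) (A B : Subfunctor E) : Subfunctor E where
  obj c := A.obj c ∪ B.obj c
  map := by
    intro U V i e he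
    rcases he with h | h
    · exact Or.inl (A.map i h)
    · exact Or.inr (B.map i h)

theorem negSieve_apply_iff {c d : C} (R : Sieve c) (f : d ⟶ c) :
    negSieve R f ↔ ∀ (d' : C) (g : d' ⟶ d), ¬ R (g ≫ f) := by
  refine ⟨fun hf d' g hg => ?_, fun hf => le_antisymm (fun d' g hg => hf d' g hg) bot_le⟩
  have hbot : (R.pullback f) g := hg
  rwa [show R.pullback f = ⊥ from hf] at hbot

section Sections

variable {E : Cᵒᵖ ⥤ Type u} {c : C} (e : E.obj (op c))

theorem sieveOfSection_unionSub (A B : Subfunctor E) :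
    (unionSub E A B).sieveOfSection e = A.sieveOfSection e ⊔ B.sieveOfSection e :=
  rfl

theorem sieveOfSection_negSub (A : Subfunctor E) :
    (negSub E A).sieveOfSection e = negSieve (A.sieveOfSection e) := by
  ext d f
  rw [negSieve_apply_iff]
  refine forall_congr' fun d' => forall_congr' fun g => ?_
  simp only [Subfunctor.sieveOfSection_apply, op_comp, Functor.map_comp_apply]

end Sections

def subfunctorOfSieve {c : C} (R : Sieve c) : Subfunctor (yoneda.obj c) where
  obj _ := {f | R f}
  map i _ hf := R.downward_closed hf i.unop

theorem sieveOfSection_subfunctorOfSieve_id {c : C} (R : Sieve c) :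
    (subfunctorOfSieve R).sieveOfSection (𝟙 c : (yoneda.obj c).obj (op c)) = R := by
  ext d f
  simp [subfunctorOfSieve]

/-- `R ⊔ ¬R` is `J`-covering for every sieve `R` if and only if for every presheaf `E`
and every subpresheaf `A` of `E`, the subpresheaf `A ⊔ N(A)` is `J`-dense in `E`, i.e.
all the sieves `S^{A ⊔ N(A)}_(c,e)` are `J`-covering. -/
theorem statement10 (J : GrothendieckTopology C) :
    (∀ (c : C) (R : Sieve c), R ⊔ negSieve R ∈ J c) ↔
    (∀ (E : Cᵒᵖ ⥤ Type u) (A : Subfunctor E) (c : C) (e : E.obj (op c)),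
      (unionSub E A (negSub E A)).sieveOfSection e ∈ J c) := by
  simp only [sieveOfSection_unionSub, sieveOfSection_negSub]
  refine ⟨fun h E A c e => h c _, fun h c R => ?_⟩
  simpa only [sieveOfSection_subfunctorOfSieve_id] using
    h (yoneda.obj c) (subfunctorOfSieve R) c (𝟙 c)

end Stmt10
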